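/- arXiv:2305.14690 — 3 statements merged into one kernel-verified Lean document; each statement's English description precedes it below -/
import Mathlib

section
/- If the test support is not contained in the training support (i.e., the set where p_te > 0 but p_tr = 0 has positive p_te-measure), and the loss L is strictly positive everywhere, then the importance-weighted objective is strictly less than the test risk: E_{p_tr}[w*·L] < E_{p_te}[L]. -/
open MeasureTheory ENNReal
open scoped Classical

/-!
On the training support the weighted integrand `w* · L · p_tr` is at most `L · p_te`, and off it
the integrand vanishes. So the importance-weighted objective is at most the test risk restricted
to `{p_tr > 0}`, and it misses the test risk on `{p_tr = 0}`, which is positive because `L > 0`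
and `p_te` has positive mass there; finiteness of the test risk makes the gap strict.
-/

theorem ENNReal.div_mul_le_self (a b : ℝ≥0∞) : a / b * b ≤ a := by
  rcases eq_or_ne b 0 with rfl | hb0
  · simp
  rcases eq_or_ne b ⊤ with rfl | hbtop
  · simp
  rw [ENNReal.div_mul_cancel hb0 hbtop]

theorem ite_div_mul_mul_le_indicator {Ω : Type*} (p q L : Ω → ℝ≥0∞) (ω : Ω) :
    (if 0 < p ω then q ω / p ω else 0) * L ω * p ω
      ≤ {ω | 0 < p ω}.indicator (fun ω => L ω * q ω) ω := by
  by_cases hp : 0 < p ω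
  · rw [if_pos hp, Set.indicator_of_mem (s := {ω | 0 < p ω}) hp, mul_right_comm, mul_comm (L ω)]
    exact mul_le_mul_left (ENNReal.div_mul_le_self _ _) _
  · simp [hp]

section

variable {α : Type*} [MeasurableSpace α] {μ : Measure α}

theorem setLIntegral_mul_pos_iff {L f : α → ℝ≥0∞} (hL : Measurable L) (hf : Measurable f)
    (hL0 : ∀ x, L x ≠ 0) {s : Set α} :
    0 < ∫⁻ x in s, L x * f x ∂μ ↔ 0 < ∫⁻ x in s, f x ∂μ := by
  rw [setLIntegral_pos_iff (f := fun x => L x * f x) (hL.mul hf), setLIntegral_pos_iff hf,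
    Function.support_mul, Set.eq_univ_of_forall (s := Function.support L) hL0, Set.univ_inter]

theorem lintegral_lt_of_le_indicator {f g : α → ℝ≥0∞} {s : Set α} (hs : MeasurableSet s)
    (hfg : f ≤ s.indicator g) (hg : ∫⁻ x, g x ∂μ ≠ ⊤) (hgsc : 0 < ∫⁻ x in sᶜ, g x ∂μ) :
    ∫⁻ x, f x ∂μ < ∫⁻ x, g x ∂μ :=
  calc ∫⁻ x, f x ∂μ ≤ ∫⁻ x in s, g x ∂μ := (lintegral_mono hfg).trans_eq (lintegral_indicator hs g)
    _ < ∫⁻ x in s, g x ∂μ + ∫⁻ x in sᶜ, g x ∂μ :=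
      ENNReal.lt_add_right (ne_top_of_le_ne_top hg (setLIntegral_le_lintegral s g)) hgsc.ne'
    _ = ∫⁻ x, g x ∂μ := lintegral_add_compl g hs

end

theorem iw_risk_inconsistent_general
    {Ω : Type*} [MeasurableSpace Ω] (ν : Measure Ω)
    (ptr pte : Ω → ℝ≥0∞) (hptr : Measurable ptr) (hpte : Measurable pte)
    (L : Ω → ℝ≥0∞) (hL : Measurable L)
    (hLpos : ∀ ω, 0 < L ω)
    (hLint : ∫⁻ ω, L ω * pte ω ∂ν < ⊤)
    (hoot : 0 < ∫⁻ ω in {ω | 0 < pte ω ∧ ptr ω = 0}, pte ω ∂ν) :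
    ∫⁻ ω, (if 0 < ptr ω then pte ω / ptr ω else 0) * L ω * ptr ω ∂ν
      < ∫⁻ ω, L ω * pte ω ∂ν := by
  refine lintegral_lt_of_le_indicator (measurableSet_lt measurable_const hptr)
    (ite_div_mul_mul_le_indicator ptr pte L) hLint.ne ?_
  rw [setLIntegral_mul_pos_iff hL hpte fun ω => (hLpos ω).ne']
  exact hoot.trans_le <| lintegral_mono_set fun ω hω => by simp [hω.2]

/-- If the part of the test support lying outside the training support has
positive test probability, and the loss `L` is strictly positive everywhere
(and integrable against `p_te`), then the importance-weighted objective is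
strictly smaller than the test risk. -/
theorem iw_risk_inconsistent
    {Ω : Type*} [MeasurableSpace Ω] (ν : Measure Ω) [SigmaFinite ν]
    (ptr pte : Ω → ℝ≥0∞) (hptr : Measurable ptr) (hpte : Measurable pte)
    (hptr1 : ∫⁻ ω, ptr ω ∂ν = 1) (hpte1 : ∫⁻ ω, pte ω ∂ν = 1)
    (L : Ω → ℝ≥0∞) (hL : Measurable L)
    (hLpos : ∀ ω, 0 < L ω) (hLfin : ∀ ω, L ω < ⊤)
    (hLint : ∫⁻ ω, L ω * pte ω ∂ν < ⊤)
    (hoot : 0 < ∫⁻ ω in {ω | 0 < pte ω ∧ ptr ω = 0}, pte ω ∂ν) :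
    ∫⁻ ω, (if 0 < ptr ω then pte ω / ptr ω else 0) * L ω * ptr ω ∂ν
      < ∫⁻ ω, L ω * pte ω ∂ν :=
  iw_risk_inconsistent_general ν ptr pte hptr hpte L hL hLpos hLint hoot
end

section
/- In the second toy example, any classifier minimizing the IW objective (i.e., Bayes-optimal on the training support that extends its decision linearly/sign-constantly to each half-plane) achieves test accuracy exactly 1/2, equal to random guessing. -/
open MeasureTheory ENNReal
open scoped Classical

def squareTL : Set (ℝ × ℝ) := Set.Ioo (0 : ℝ) 1 ×ˢ Set.Ioo (1.1 : ℝ) 2.1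
def squareBL : Set (ℝ × ℝ) := Set.Ioo (0 : ℝ) 1 ×ˢ Set.Ioo (0 : ℝ) 1
def squareTR : Set (ℝ × ℝ) := Set.Ioo (1.1 : ℝ) 2.1 ×ˢ Set.Ioo (1.1 : ℝ) 2.1
def squareBR : Set (ℝ × ℝ) := Set.Ioo (1.1 : ℝ) 2.1 ×ˢ Set.Ioo (0 : ℝ) 1

noncomputable def pTeToy2 (p : ℝ × ℝ) (y : Bool) : ℝ≥0∞ :=
  if (y = true ∧ (p ∈ squareTL ∨ p ∈ squareBR)) ∨
     (y = false ∧ (p ∈ squareBL ∨ p ∈ squareTR)) then 1/4 else 0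

noncomputable def toyAccuracy2 (f : ℝ × ℝ → ℝ) : ℝ≥0∞ :=
  ∑ y : Bool, ∫⁻ p in {p | (0 < f p ↔ y = true)}, pTeToy2 p y
    ∂(volume : Measure (ℝ × ℝ))

/-! On each label the test density is `1/4` times the indicator of two squares. Restricted to
the region where that label is predicted, only one of the two squares survives (the decision
is constant on horizontal bands), so each label contributes `1/4 · 1` to the accuracy. -/

theorem setLIntegral_indicator_const {α : Type*} [MeasurableSpace α] (μ : Measure α)
    {A : Set α} (hA : MeasurableSet A) (S : Set α) (c : ℝ≥0∞) :
    ∫⁻ p in S, A.indicator (fun _ => c) p ∂μ = c * μ (A ∩ S) := by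
  rw [lintegral_indicator_const hA, Measure.restrict_apply hA]

theorem Set.union_inter_eq_left_of_subset_of_disjoint {α : Type*} {A B S : Set α}
    (hA : A ⊆ S) (hB : Disjoint B S) : (A ∪ B) ∩ S = A := by
  rw [Set.union_inter_distrib_right, Set.inter_eq_left.mpr hA, hB.inter_eq, Set.union_empty]

theorem volume_Ioo_prod_Ioo_add_one (a c : ℝ) :
    volume (Set.Ioo a (a + 1) ×ˢ Set.Ioo c (c + 1)) = 1 := by
  simp [Measure.volume_eq_prod, Measure.prod_prod, Real.volume_Ioo]

theorem measurableSet_Ioo_prod_Ioo (a b c d : ℝ) :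
    MeasurableSet (Set.Ioo a b ×ˢ Set.Ioo c d) :=
  measurableSet_Ioo.prod measurableSet_Ioo

theorem volume_squareTL : volume squareTL = 1 := by
  convert volume_Ioo_prod_Ioo_add_one 0 1.1 using 4
  norm_num [squareTL]

theorem volume_squareBL : volume squareBL = 1 := by
  convert volume_Ioo_prod_Ioo_add_one 0 0 using 4
  norm_num [squareBL]

theorem measurableSet_squareTL_union_squareBR : MeasurableSet (squareTL ∪ squareBR) :=
  (measurableSet_Ioo_prod_Ioo ..).union (measurableSet_Ioo_prod_Ioo ..)

theorem measurableSet_squareBL_union_squareTR : MeasurableSet (squareBL ∪ squareTR) :=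
  (measurableSet_Ioo_prod_Ioo ..).union (measurableSet_Ioo_prod_Ioo ..)

theorem pTeToy2_true :
    (fun p => pTeToy2 p true) = (squareTL ∪ squareBR).indicator (fun _ => 1/4) := by
  ext p
  simp [pTeToy2, Set.indicator_apply]

theorem pTeToy2_false :
    (fun p => pTeToy2 p false) = (squareBL ∪ squareTR).indicator (fun _ => 1/4) := by
  ext p
  simp [pTeToy2, Set.indicator_apply]

theorem toy_example_two_iw_minimizer_accuracy_half_general
    (f : ℝ × ℝ → ℝ)
    (htop : ∀ p ∈ squareTL ∪ squareTR, 0 < f p)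
    (hbot : ∀ p ∈ squareBL ∪ squareBR, f p < 0) :
    toyAccuracy2 f = 1/2 := by
  have hpos : (squareTL ∪ squareBR) ∩ {p | 0 < f p} = squareTL :=
    Set.union_inter_eq_left_of_subset_of_disjoint (fun p hp => htop p (.inl hp))
      (Set.disjoint_left.mpr fun p hp hpos => (hbot p (.inr hp)).not_gt hpos)
  have hneg : (squareBL ∪ squareTR) ∩ {p | ¬0 < f p} = squareBL :=
    Set.union_inter_eq_left_of_subset_of_disjoint (fun p hp => (hbot p (.inl hp)).not_gt)
      (Set.disjoint_left.mpr fun p hp hneg => hneg (htop p (.inr hp)))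
  simp only [toyAccuracy2, Fintype.sum_bool, iff_true, Bool.false_eq_true, iff_false]
  rw [pTeToy2_true, pTeToy2_false,
    setLIntegral_indicator_const _ measurableSet_squareTL_union_squareBR,
    setLIntegral_indicator_const _ measurableSet_squareBL_union_squareTR,
    hpos, hneg, volume_squareTL, volume_squareBL, mul_one, ENNReal.div_add_div_same,
    ENNReal.div_eq_div_iff (by norm_num) (by norm_num) (by norm_num) (by norm_num)]
  norm_num

/-- In the second toy example, any classifier that is Bayes-optimal on the
training support and extends its decision sign-constantly over each
horizontal band (positive on both top squares, negative on both bottom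
squares) achieves test accuracy exactly 1/2 — random guessing. -/
theorem toy_example_two_iw_minimizer_accuracy_half
    (f : ℝ × ℝ → ℝ) (hf : Measurable f)
    (htop : ∀ p ∈ squareTL ∪ squareTR, 0 < f p)
    (hbot : ∀ p ∈ squareBL ∪ squareBR, f p < 0) :
    toyAccuracy2 f = 1/2 :=
  toy_example_two_iw_minimizer_accuracy_half_general f htop hbot
end

section
/- In the second toy example, the Bayes-optimal test classifier is the 'checkerboard' classifier: any f with f > 0 on the top-left and bottom-right squares and f < 0 on the bottom-left and top-right squares achieves test accuracy 1, and no classifier can exceed this; hence IW (whose minimizer has accuracy 1/2) is classifier-inconsistent. -/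
open MeasureTheory ENNReal
open scoped Classical

/-! The test density is `1/4` times the indicator of the region carrying label `y`, a disjoint
union of two unit squares, so `pTeToy2` has total mass `1`. A classifier that is correct on both
regions collects all of this mass, and no classifier can collect more. -/

def labelRegion (y : Bool) : Set (ℝ × ℝ) :=
  if y = true then squareTL ∪ squareBR else squareBL ∪ squareTR

lemma pTeToy2_eq_indicator (y : Bool) :
    (pTeToy2 · y) = (labelRegion y).indicator fun _ => 1 / 4 := by
  funext p
  cases y <;> simp [pTeToy2, labelRegion, Set.indicator_apply]

lemma measurableSet_labelRegion (y : Bool) : MeasurableSet (labelRegion y) := by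
  cases y <;>
    exact (measurableSet_Ioo.prod measurableSet_Ioo).union
      (measurableSet_Ioo.prod measurableSet_Ioo)

lemma volume_labelRegion (y : Bool) : volume (labelRegion y) = 2 := by
  have hvol_left : volume (Set.Ioo (0 : ℝ) 1) = 1 := by simp
  have hvol_right : volume (Set.Ioo (1.1 : ℝ) 2.1) = 1 := by rw [Real.volume_Ioo]; norm_num
  have hdisj : Disjoint (Set.Ioo (0 : ℝ) 1) (Set.Ioo 1.1 2.1) := by
    rw [Set.Ioo_disjoint_Ioo]; norm_num
  cases y <;>
    simp only [labelRegion, squareTL, squareBL, squareTR, squareBR, Bool.false_eq_true,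
      if_true, if_false] <;>
    rw [measure_union (Set.disjoint_prod.2 (Or.inl hdisj))
        (measurableSet_Ioo.prod measurableSet_Ioo),
      Measure.volume_eq_prod, Measure.prod_prod, Measure.prod_prod] <;>
    simp only [hvol_left, hvol_right, mul_one, one_add_one_eq_two]

lemma lintegral_pTeToy2 (y : Bool) : ∫⁻ p, pTeToy2 p y = 1 / 2 := by
  rw [pTeToy2_eq_indicator, lintegral_indicator_const (measurableSet_labelRegion y),
    volume_labelRegion, mul_comm, ← mul_div_assoc, mul_one, ENNReal.div_eq_div_iff] <;> norm_num

lemma sum_lintegral_pTeToy2 : ∑ y : Bool, ∫⁻ p, pTeToy2 p y = 1 := by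
  simp only [lintegral_pTeToy2, Fintype.sum_bool, ENNReal.add_halves]

lemma toyAccuracy2_le_one (g : ℝ × ℝ → ℝ) : toyAccuracy2 g ≤ 1 :=
  calc toyAccuracy2 g ≤ ∑ y : Bool, ∫⁻ p, pTeToy2 p y :=
        Finset.sum_le_sum fun _ _ => setLIntegral_le_lintegral _ _
    _ = 1 := sum_lintegral_pTeToy2

lemma toyAccuracy2_eq_one_of_correct_on_labelRegion (f : ℝ × ℝ → ℝ)
    (hf : ∀ y, labelRegion y ⊆ {p | 0 < f p ↔ y = true}) : toyAccuracy2 f = 1 := by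
  rw [toyAccuracy2, ← sum_lintegral_pTeToy2]
  refine Finset.sum_congr rfl fun y _ => setLIntegral_eq_of_support_subset ?_
  rw [pTeToy2_eq_indicator]
  exact Set.support_indicator_subset.trans (hf y)

theorem toy_example_two_checkerboard_bayes_optimal_general
    (f : ℝ × ℝ → ℝ)
    (hpos : ∀ p ∈ squareTL ∪ squareBR, 0 < f p)
    (hneg : ∀ p ∈ squareBL ∪ squareTR, f p < 0) :
    toyAccuracy2 f = 1 ∧ ∀ g : ℝ × ℝ → ℝ, toyAccuracy2 g ≤ 1 := by
  refine ⟨toyAccuracy2_eq_one_of_correct_on_labelRegion f ?_, toyAccuracy2_le_one⟩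
  rintro (_ | _) p hp
  · simpa using (hneg p hp).le
  · simpa using hpos p hp

/-- In the second toy example, the 'checkerboard' classifier (positive on the
top-left and bottom-right squares, negative on the bottom-left and top-right
squares) achieves test accuracy 1, and no classifier can exceed accuracy 1;
hence the IW minimizer (whose accuracy is 1/2) is classifier-inconsistent. -/
theorem toy_example_two_checkerboard_bayes_optimal
    (f : ℝ × ℝ → ℝ) (hf : Measurable f)
    (hpos : ∀ p ∈ squareTL ∪ squareBR, 0 < f p)
    (hneg : ∀ p ∈ squareBL ∪ squareTR, f p < 0) :
    toyAccuracy2 f = 1 ∧ ∀ g : ℝ × ℝ → ℝ, toyAccuracy2 g ≤ 1 :=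
  toy_example_two_checkerboard_bayes_optimal_general f hpos hneg
end
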